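/- For a fixed invertible matrix a ∈ GL(r, ℝ), the determinant of the linear endomorphism of Sym(r, ℝ) given by X ↦ a X aᵀ equals (det a)^{r+1}. -/

import Mathlib

open Matrix MatrixGroups

/-- The submodule of symmetric matrices in `Matrix (Fin r) (Fin r) ℝ`. -/
def symSubmodule (r : ℕ) : Submodule ℝ (Matrix (Fin r) (Fin r) ℝ) where
  carrier := {X | X.IsSymm}
  add_mem' := by
    intro a b ha hb
    simp only [Set.mem_setOf_eq, Matrix.IsSymm] at *
    simp [Matrix.transpose_add, ha, hb]
  zero_mem' := by simp [Matrix.IsSymm]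
  smul_mem' := by
    intro c a ha
    simp only [Set.mem_setOf_eq, Matrix.IsSymm] at *
    simp [Matrix.transpose_smul, ha]

/-- The linear endomorphism `X ↦ a X aᵀ` of the space of symmetric matrices. -/
def congrMapSym (r : ℕ) (a : Matrix (Fin r) (Fin r) ℝ) :
    symSubmodule r →ₗ[ℝ] symSubmodule r where
  toFun X := ⟨a * (X : Matrix (Fin r) (Fin r) ℝ) * aᵀ, by
    have h : ((X : Matrix (Fin r) (Fin r) ℝ))ᵀ = (X : Matrix (Fin r) (Fin r) ℝ) := X.2
    show (a * (X : Matrix (Fin r) (Fin r) ℝ) * aᵀ).IsSymm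
    unfold Matrix.IsSymm
    rw [Matrix.transpose_mul, Matrix.transpose_mul, Matrix.transpose_transpose, h,
      Matrix.mul_assoc]⟩
  map_add' X Y := by
    apply Subtype.ext
    show a * ((X : Matrix (Fin r) (Fin r) ℝ) + (Y : Matrix (Fin r) (Fin r) ℝ)) * aᵀ =
      a * (X : Matrix (Fin r) (Fin r) ℝ) * aᵀ + a * (Y : Matrix (Fin r) (Fin r) ℝ) * aᵀ
    rw [Matrix.mul_add, Matrix.add_mul]
  map_smul' c X := by
    apply Subtype.ext
    show a * (c • (X : Matrix (Fin r) (Fin r) ℝ)) * aᵀ = c • (a * (X : Matrix _ _ ℝ) * aᵀ)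
    rw [Matrix.mul_smul, Matrix.smul_mul]

/-!
Both `a ↦ det (X ↦ a X aᵀ)` and `a ↦ (det a) ^ (r + 1)` are multiplicative maps on matrices.
A multiplicative map into a commutative monoid kills every transvection, because conjugating a
transvection by `diag(2, 1, …, 1)` doubles it, which makes it a commutator. Since every matrix
is a product of transvections and a diagonal matrix, the two maps agree as soon as they agree on
diagonal matrices. For `a = diagonal d` the symmetric matrices supported on `{i, j}` are
eigenvectors with eigenvalue `d i * d j`, and in `∏_{i ≤ j} d i * d j` each `d i` occurs `r + 1`
times.
-/

namespace Matrix

variable {n : Type*} [Fintype n] [DecidableEq n]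

section CommRing

variable {R : Type*} [CommRing R]

theorem diagonal_mul_transvection {i j : n} {d : n → R} (hd : d j = 1) (c : R) :
    diagonal d * transvection i j c = transvection i j (d i * c) * diagonal d := by
  ext a b
  simp only [transvection, add_apply, diagonal_mul, mul_diagonal, single_apply, one_apply]
  split_ifs <;> simp_all [mul_add]

theorem map_transvection_eq_one {M : Type*} [CommMonoid M] (f : Matrix n n R →* M)
    (h2 : IsUnit (2 : R)) {i j : n} (hij : i ≠ j) (c : R) : f (transvection i j c) = 1 := by
  set D : Matrix n n R := diagonal (Function.update 1 i 2)
  set T := transvection i j c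
  have hD : IsUnit (f D) := by
    refine IsUnit.map f (isUnit_diagonal.2 (Pi.isUnit_iff.2 fun k => ?_))
    rcases eq_or_ne k i with rfl | hk
    · simpa using h2
    · simp [hk]
  have hT : IsUnit (f T) :=
    ((isUnit_iff_isUnit_det T).2 (by simp [T, det_transvection_of_ne _ _ hij])).map f
  have hconj : D * T = T * T * D := by
    rw [diagonal_mul_transvection (by simp [hij.symm]),
      transvection_mul_transvection_same _ _ hij]
    simp [two_mul, D]
  have key : f T * 1 * f D = f T * f T * f D := by
    rw [mul_one, mul_comm, ← map_mul, hconj, map_mul, map_mul]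
  exact (hT.mul_left_cancel (hD.mul_right_cancel key)).symm

end CommRing

theorem monoidHom_ext_of_diagonal {𝕜 M : Type*} [Field 𝕜] [CommMonoid M]
    (h2 : (2 : 𝕜) ≠ 0) {f g : Matrix n n 𝕜 →* M} (h : ∀ d, f (diagonal d) = g (diagonal d)) : f = g := by
  ext A
  refine diagonal_transvection_induction (fun A => f A = g A) A (fun d _ => h d) (fun t => ?_)
    (fun A B hA hB => by simp only [map_mul, hA, hB])
  rw [TransvectionStruct.toMatrix, map_transvection_eq_one f h2.isUnit t.hij,
    map_transvection_eq_one g h2.isUnit t.hij]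

end Matrix

section

open Finset

theorem Finset.card_filter_le_add_card_filter_ge {ι : Type*} [Fintype ι] [LinearOrder ι]
    (i : ι) :
    #{j | i ≤ j} + #{j | j ≤ i} = Fintype.card ι + 1 := by
  have hunion : univ.filter (i ≤ ·) ∪ univ.filter (· ≤ i) = univ := by
    ext j; simp [le_total]
  have hinter : univ.filter (i ≤ ·) ∩ univ.filter (· ≤ i) = {i} := by
    ext j; simp [le_antisymm_iff, and_comm]
  rw [← card_union_add_card_inter, hunion, hinter, card_univ, card_singleton]

theorem Sym2.prod_mul_map_eq_prod_pow {ι M : Type*} [Fintype ι] [LinearOrder ι] [CommMonoid M]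
    (d : ι → M) :
    ∏ s : Sym2 ι, (s.map d).mul = (∏ i, d i) ^ (Fintype.card ι + 1) := by
  calc ∏ s : Sym2 ι, (s.map d).mul
      = ∏ p : {p : ι × ι // p.1 ≤ p.2}, d p.1.1 * d p.1.2 :=
        (Fintype.prod_equiv Sym2.sortEquiv.symm _ _ fun _ => rfl).symm
    _ = ∏ p : ι × ι with p.1 ≤ p.2, d p.1 * d p.2 :=
        (prod_subtype _ (fun p => mem_filter_univ p) fun p : ι × ι => d p.1 * d p.2).symm
    _ = ∏ i, ∏ j with i ≤ j, d i * d j := by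
        simp only [prod_filter]
        exact Fintype.prod_prod_type _
    _ = ∏ i, d i ^ (#{j | i ≤ j} + #{j | j ≤ i}) := by
        have hswap : ∏ i, ∏ j with i ≤ j, d j = ∏ j, ∏ i with i ≤ j, d j :=
          prod_comm' fun _ _ => by simp
        simp only [prod_mul_distrib, pow_add]
        rw [hswap]
        simp only [prod_const]
    _ = (∏ i, d i) ^ (Fintype.card ι + 1) := by
        simp only [Finset.card_filter_le_add_card_filter_ge, Finset.prod_pow]

end

def symSubmoduleEquivSym2 (r : ℕ) : symSubmodule r ≃ₗ[ℝ] (Sym2 (Fin r) → ℝ) where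
  toFun X := Sym2.lift ⟨fun i j => (X : Matrix (Fin r) (Fin r) ℝ) i j,
    fun i j => (X.2.apply i j).symm⟩
  map_add' X Y := by ext s; induction s using Sym2.ind; rfl
  map_smul' c X := by ext s; induction s using Sym2.ind; rfl
  invFun f := ⟨of fun i j => f s(i, j), by ext i j; simp [Sym2.eq_swap]⟩
  left_inv X := rfl
  right_inv f := by ext s; induction s using Sym2.ind; rfl

theorem det_congrMapSym_diagonal (r : ℕ) (d : Fin r → ℝ) :
    LinearMap.det (congrMapSym r (diagonal d)) = (∏ i, d i) ^ (r + 1) := by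
  set e := symSubmoduleEquivSym2 r
  have hconj : (e : symSubmodule r →ₗ[ℝ] _) ∘ₗ congrMapSym r (diagonal d) ∘ₗ
      (e.symm : _ →ₗ[ℝ] symSubmodule r) =
        toLin' (diagonal fun s : Sym2 (Fin r) => (s.map d).mul) := by
    refine LinearMap.ext fun f => funext fun s => ?_
    induction s using Sym2.ind with | _ i j
    rw [toLin'_apply, mulVec_diagonal, Sym2.map_mk, Sym2.mul_mk]
    change (diagonal d * of (fun i j => f s(i, j)) * (diagonal d)ᵀ) i j = d i * d j * f s(i, j)
    rw [diagonal_transpose, mul_diagonal, diagonal_mul, of_apply, mul_right_comm]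
  rw [← LinearMap.det_conj _ e, hconj, LinearMap.det_toLin', det_diagonal,
    Sym2.prod_mul_map_eq_prod_pow, Fintype.card_fin]

def congrMapSymHom (r : ℕ) : Matrix (Fin r) (Fin r) ℝ →* Module.End ℝ (symSubmodule r) where
  toFun := congrMapSym r
  map_one' := LinearMap.ext fun X => Subtype.ext (by simp [congrMapSym])
  map_mul' a b := LinearMap.ext fun X => Subtype.ext <| by
    simp [congrMapSym, Matrix.mul_assoc, Matrix.transpose_mul]

theorem det_congrMapSym (r : ℕ) (a : Matrix (Fin r) (Fin r) ℝ) :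
    LinearMap.det (congrMapSym r a) = a.det ^ (r + 1) := by
  have h : LinearMap.det.comp (congrMapSymHom r) = (powMonoidHom (r + 1)).comp detMonoidHom :=
    monoidHom_ext_of_diagonal two_ne_zero fun d => by
      simp [congrMapSymHom, det_congrMapSym_diagonal, det_diagonal, Finset.prod_pow]
  exact DFunLike.congr_fun h a

theorem stmt6 (r : ℕ) (a : GL (Fin r) ℝ) :
    LinearMap.det (congrMapSym r (a : Matrix (Fin r) (Fin r) ℝ)) =
      ((a : Matrix (Fin r) (Fin r) ℝ).det) ^ (r + 1) :=
  det_congrMapSym r a
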